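/- For every integer n ≥ 1, every binary word w of length n, and every κ > 0, the set A_{κ,w} ⊆ [0,1) of κ,w-atypical points has Lebesgue measure zero. Equivalently, for Lebesgue-almost every x ∈ [0,1), the frequency a_k(x,w) of occurrences of w among the first k binary digits of x converges to 2^{−n} as k → ∞. -/

import Mathlib

/-!
Under Lebesgue measure on `[0, 1)` the binary digits are independent fair coins: a cylinder
prescribing `k` digits has measure `2⁻ᵏ`. This follows by induction through the doubling map
`x ↦ 2x mod 1`, which shifts the digits, preserves the measure, and is independent of the first
digit. Occurrences of `w` at the positions `r, r + n, r + 2n, …` involve disjoint sets of digits,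
so they are independent events of probability `2⁻ⁿ`, and Etemadi's strong law of large numbers
gives almost sure convergence of their frequency in each residue class modulo `n`. Averaging the
`n` residue classes gives the frequency over all positions, and a convergent sequence has no
cluster point besides its limit.
-/

open MeasureTheory

/-- Number of occurrences of the word `w` (of length `n`) in the word `v` (of length `N`). -/
noncomputable def occCount (N n : ℕ) (v : Fin N → Bool) (w : Fin n → Bool) : ℕ :=
  Nat.card {i : ℕ // i + n ≤ N ∧ ∀ (j : Fin n) (h : i + (j : ℕ) < N), v ⟨i + (j : ℕ), h⟩ = w j}

/-- The `i`-th binary digit of `x ∈ [0,1)`: `ω_i(x) = ⌊2^(i+1) x⌋ mod 2`. -/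
noncomputable def binDigit (i : ℕ) (x : ℝ) : Bool :=
  decide (⌊(2 : ℝ) ^ (i + 1) * x⌋ % 2 = 1)

/-- `a_k(x, w)`: the frequency of occurrences of `w` among the first `k` binary digits of `x`. -/
noncomputable def freq (n k : ℕ) (w : Fin n → Bool) (x : ℝ) : ℝ :=
  (occCount k n (fun i : Fin k => binDigit (i : ℕ) x) w : ℝ) / k

/-- A point `x` is `κ,w`-atypical if the sequence `(a_k(x,w))_k` has a limit (accumulation)
point outside the interval `[2⁻ⁿ - κ, 2⁻ⁿ + κ]`. -/
def IsAtypicalPt (n : ℕ) (κ : ℝ) (w : Fin n → Bool) (x : ℝ) : Prop :=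
  ∃ c : ℝ, c ∉ Set.Icc ((1 / 2 : ℝ) ^ n - κ) ((1 / 2 : ℝ) ^ n + κ) ∧
    MapClusterPt c Filter.atTop (fun k : ℕ => freq n k w x)

open Set Filter Topology ProbabilityTheory
open scoped Finset

local notation "ℓ" => volume.restrict (Ico (0 : ℝ) 1)

instance : IsProbabilityMeasure ℓ :=
  ⟨by rw [Measure.restrict_apply_univ, Real.volume_Ico, sub_zero, ENNReal.ofReal_one]⟩

lemma measurable_binDigit (i : ℕ) : Measurable (binDigit i) :=
  (measurable_from_top (f := fun z : ℤ => decide (z % 2 = 1))).comp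
    (Int.measurable_floor.comp (measurable_const_mul _))

noncomputable def doublingMap (x : ℝ) : ℝ := Int.fract (2 * x)

lemma measurable_doublingMap : Measurable doublingMap :=
  measurable_fract.comp (measurable_const_mul 2)

lemma binDigit_succ (i : ℕ) (x : ℝ) : binDigit (i + 1) x = binDigit i (doublingMap x) := by
  have h : (2 : ℝ) ^ (i + 1) * doublingMap x
      = 2 ^ (i + 1 + 1) * x - ((2 * (2 ^ i * ⌊2 * x⌋) : ℤ) : ℝ) := by
    rw [doublingMap, Int.fract]; push_cast; ring
  rw [binDigit, binDigit, h, Int.floor_sub_intCast, Int.sub_mul_emod_self_left]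

lemma floor_two_mul_eq_iff (x : ℝ) (b : Bool) :
    ⌊2 * x⌋ = b.toNat ↔ x ∈ Ico (0 : ℝ) 1 ∧ binDigit 0 x = b := by
  have hx : x ∈ Ico (0 : ℝ) 1 ↔ 0 ≤ ⌊2 * x⌋ ∧ ⌊2 * x⌋ < 2 := by
    rw [Int.floor_nonneg, Int.floor_lt, mem_Ico]
    constructor <;> rintro ⟨h₁, h₂⟩ <;> constructor <;> push_cast at * <;> linarith
  rw [hx, binDigit, zero_add, pow_one]
  cases b <;>
    simp only [Bool.toNat_false, Bool.toNat_true, Nat.cast_zero, Nat.cast_one,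
      decide_eq_false_iff_not, decide_eq_true_eq] <;> omega

lemma preimage_two_mul_sub_eq (b : Bool) (C : Set ℝ) :
    (fun x : ℝ => 2 * x - b.toNat) ⁻¹' (C ∩ Ico 0 1)
      = ({x | binDigit 0 x = b} ∩ doublingMap ⁻¹' C) ∩ Ico 0 1 := by
  ext x
  have hfloor : 2 * x - b.toNat ∈ Ico (0 : ℝ) 1 ↔ ⌊2 * x⌋ = b.toNat := by
    rw [Int.floor_eq_iff, mem_Ico]
    push_cast
    constructor <;> rintro ⟨h₁, h₂⟩ <;> constructor <;> linarith
  have hfract : ⌊2 * x⌋ = b.toNat → doublingMap x = 2 * x - b.toNat := fun h => by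
    rw [doublingMap, Int.fract, h, Int.cast_natCast]
  simp only [mem_preimage, mem_inter_iff, mem_ofPred_eq]
  rw [hfloor]
  constructor
  · rintro ⟨hC, hb⟩
    obtain ⟨hx, hb'⟩ := (floor_two_mul_eq_iff x b).1 hb
    exact ⟨⟨hb', hfract hb ▸ hC⟩, hx⟩
  · rintro ⟨⟨hb, hC⟩, hx⟩
    have h := (floor_two_mul_eq_iff x b).2 ⟨hx, hb⟩
    exact ⟨hfract h ▸ hC, h⟩

lemma volume_preimage_two_mul_sub (c : ℝ) (S : Set ℝ) :
    volume ((fun x : ℝ => 2 * x - c) ⁻¹' S) = 2⁻¹ * volume S := by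
  have h := Real.volume_preimage_mul_left (a := 2) two_ne_zero ((fun y => y + -c) ⁻¹' S)
  rw [measure_preimage_add_right] at h
  simp only [preimage_preimage, ← sub_eq_add_neg] at h
  rw [h, abs_of_pos (by norm_num), ENNReal.ofReal_inv_of_pos two_pos, ENNReal.ofReal_ofNat]

lemma measure_binDigit_zero_inter_preimage_doublingMap (b : Bool) (C : Set ℝ) :
    ℓ ({x | binDigit 0 x = b} ∩ doublingMap ⁻¹' C) = 2⁻¹ * ℓ C := by
  rw [Measure.restrict_apply' measurableSet_Ico, Measure.restrict_apply' measurableSet_Ico,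
    ← preimage_two_mul_sub_eq, volume_preimage_two_mul_sub]

lemma measure_preimage_doublingMap {C : Set ℝ} (hC : MeasurableSet C) :
    ℓ (doublingMap ⁻¹' C) = ℓ C := by
  have hsplit : doublingMap ⁻¹' C = ({x | binDigit 0 x = false} ∩ doublingMap ⁻¹' C) ∪
      ({x | binDigit 0 x = true} ∩ doublingMap ⁻¹' C) := by
    ext x; cases h : binDigit 0 x <;> simp [h]
  rw [hsplit, measure_union, measure_binDigit_zero_inter_preimage_doublingMap,
    measure_binDigit_zero_inter_preimage_doublingMap, ← add_mul, ENNReal.inv_two_add_inv_two,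
    one_mul]
  · exact disjoint_left.2 fun x h₁ h₂ => Bool.false_ne_true (h₁.1.symm.trans h₂.1)
  · exact (measurable_binDigit 0 (measurableSet_singleton true)).inter (measurable_doublingMap hC)

lemma card_eq_card_preimage_succ_add (s : Finset ℕ) :
    #s = #(s.preimage Nat.succ Nat.succ_injective.injOn) + if 0 ∈ s then 1 else 0 := by
  classical
  have hpos : #(s.preimage Nat.succ Nat.succ_injective.injOn) = #{i ∈ s | 0 < i} := by
    rw [Finset.card_preimage, Nat.range_succ]; simp only [mem_ofPred_eq]
  have hzero : #{i ∈ s | ¬ 0 < i} = if 0 ∈ s then 1 else 0 := by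
    simp only [not_lt, Nat.le_zero, Finset.filter_eq', apply_ite Finset.card,
      Finset.card_singleton, Finset.card_empty]
  rw [hpos, ← hzero, Finset.card_filter_add_card_filter_not]

def digitCylinder (s : Finset ℕ) (f : ℕ → Bool) : Set ℝ := {x | ∀ i ∈ s, binDigit i x = f i}

lemma measurableSet_digitCylinder (s : Finset ℕ) (f : ℕ → Bool) :
    MeasurableSet (digitCylinder s f) := by
  have h : digitCylinder s f = ⋂ i ∈ s, binDigit i ⁻¹' {f i} := by ext; simp [digitCylinder]
  exact h ▸ Finset.measurableSet_biInter s fun i _ =>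
    measurable_binDigit i (measurableSet_singleton (f i))

lemma iInter_digitCylinder {ι : Type*} (S : Finset ι) (s : ι → Finset ℕ) (f : ℕ → Bool) :
    ⋂ m ∈ S, digitCylinder (s m) f = digitCylinder (S.biUnion s) f := by
  ext x
  simp only [digitCylinder, mem_iInter, mem_ofPred_eq, Finset.mem_biUnion]
  exact ⟨fun h i ⟨m, hm, hi⟩ => h m hm i hi, fun h m hm i hi => h i ⟨m, hm, hi⟩⟩

lemma mem_digitCylinder_iff (s : Finset ℕ) (f : ℕ → Bool) (x : ℝ) :
    x ∈ digitCylinder s f ↔ (0 ∈ s → binDigit 0 x = f 0) ∧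
      doublingMap x ∈
        digitCylinder (s.preimage Nat.succ Nat.succ_injective.injOn) (f ∘ Nat.succ) := by
  simp only [digitCylinder, mem_ofPred_eq, Finset.mem_preimage, Function.comp_apply,
    ← binDigit_succ]
  refine ⟨fun h => ⟨h 0, fun i => h (i + 1)⟩, fun ⟨h₀, h⟩ i hi => ?_⟩
  cases i with
  | zero => exact h₀ hi
  | succ i => exact h i hi

theorem measure_digitCylinder (s : Finset ℕ) (f : ℕ → Bool) :
    ℓ (digitCylinder s f) = 2⁻¹ ^ #s := by
  obtain ⟨N, hN⟩ := s.exists_nat_subset_range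
  induction N generalizing s f with
  | zero =>
    obtain rfl : s = ∅ := Finset.subset_empty.1 hN
    simp [digitCylinder]
  | succ N ih =>
    set s' := s.preimage Nat.succ Nat.succ_injective.injOn
    have hs' : ℓ (digitCylinder s' (f ∘ Nat.succ)) = 2⁻¹ ^ #s' :=
      ih _ _ fun i hi => by simpa using hN (Finset.mem_preimage.1 hi)
    by_cases h₀ : 0 ∈ s
    · have hcyl : digitCylinder s f
          = {x | binDigit 0 x = f 0} ∩ doublingMap ⁻¹' digitCylinder s' (f ∘ Nat.succ) := by
        ext x; rw [mem_digitCylinder_iff]; simp [h₀, s']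
      rw [hcyl, measure_binDigit_zero_inter_preimage_doublingMap, hs',
        card_eq_card_preimage_succ_add s, if_pos h₀, pow_succ']
    · have hcyl : digitCylinder s f = doublingMap ⁻¹' digitCylinder s' (f ∘ Nat.succ) := by
        ext x; rw [mem_digitCylinder_iff]; simp [h₀, s']
      rw [hcyl, measure_preimage_doublingMap (measurableSet_digitCylinder _ _), hs',
        card_eq_card_preimage_succ_add s, if_neg h₀, add_zero]

lemma identDistrib_indicator_one {Ω β : Type*} [MeasurableSpace Ω] [MeasurableSpace β] [Zero β]
    [One β] {μ : Measure Ω} [IsFiniteMeasure μ] {A B : Set Ω} (hA : MeasurableSet A)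
    (hB : MeasurableSet B) (h : μ A = μ B) :
    IdentDistrib (A.indicator 1 : Ω → β) (B.indicator 1) μ μ := by
  classical
  have hmA : Measurable (A.indicator 1 : Ω → β) := measurable_const.indicator hA
  have hmB : Measurable (B.indicator 1 : Ω → β) := measurable_const.indicator hB
  refine ⟨hmA.aemeasurable, hmB.aemeasurable, Measure.ext fun s hs => ?_⟩
  rw [Measure.map_apply hmA hs, Measure.map_apply hmB hs, Pi.one_def,
    indicator_const_preimage_eq_union, indicator_const_preimage_eq_union]
  split_ifs <;> simp [measure_compl, hA, hB, h]

section Occurrences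

variable {n : ℕ} (w : Fin n → Bool)

def occursAt (i : ℕ) : Set ℝ := {x | ∀ j : Fin n, binDigit (i + j) x = w j}

lemma measurableSet_occursAt (i : ℕ) : MeasurableSet (occursAt w i) := by
  simp only [occursAt, ofPred_forall]
  exact MeasurableSet.iInter fun j => measurable_binDigit _ (measurableSet_singleton (w j))

/-- One pattern for all occurrences of `w` at the positions `r + m * n`: it makes them cylinders
over pairwise disjoint sets of digits. -/
def periodicWord (hn : 0 < n) (r t : ℕ) : Bool := w ⟨(t - r) % n, Nat.mod_lt _ hn⟩

lemma occursAt_eq_digitCylinder (hn : 0 < n) (r m : ℕ) :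
    occursAt w (r + m * n)
      = digitCylinder (Finset.Ico (r + m * n) (r + m * n + n)) (periodicWord w hn r) := by
  have hmod : ∀ j < n, (r + m * n + j - r) % n = j := fun j hj => by
    rw [show r + m * n + j - r = j + m * n by omega, Nat.add_mul_mod_self_right,
      Nat.mod_eq_of_lt hj]
  ext x
  simp only [occursAt, digitCylinder, mem_ofPred_eq, Finset.mem_Ico, periodicWord]
  constructor
  · intro h t ⟨ht₁, ht₂⟩
    obtain ⟨j, hj, rfl⟩ : ∃ j < n, t = r + m * n + j := ⟨t - (r + m * n), by omega, by omega⟩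
    simp only [h ⟨j, hj⟩, hmod j hj]
  · intro h j
    rw [h _ ⟨by omega, by omega⟩]
    simp only [hmod j j.2]

lemma measure_occursAt (hn : 0 < n) (i : ℕ) : ℓ (occursAt w i) = 2⁻¹ ^ n := by
  have h := occursAt_eq_digitCylinder w hn i 0
  rw [zero_mul, add_zero] at h
  rw [h, measure_digitCylinder, Nat.card_Ico, Nat.add_sub_cancel_left]

theorem iIndepSet_occursAt (hn : 0 < n) (r : ℕ) :
    iIndepSet (fun m => occursAt w (r + m * n)) ℓ := by
  classical
  refine (iIndepSet_iff_meas_biInter fun m => measurableSet_occursAt w _).2 fun S => ?_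
  have hdisj : (S : Set ℕ).PairwiseDisjoint fun m => Finset.Ico (r + m * n) (r + m * n + n) := by
    intro m _ m' _ hne
    refine Finset.disjoint_left.2 fun t ht ht' => ?_
    simp only [Finset.mem_Ico] at ht ht'
    rcases Nat.lt_or_gt_of_ne hne with h | h <;> nlinarith
  simp_rw [occursAt_eq_digitCylinder w hn r, iInter_digitCylinder, measure_digitCylinder,
    Finset.card_biUnion hdisj, Nat.card_Ico, Nat.add_sub_cancel_left, Finset.sum_const,
    Finset.prod_const, smul_eq_mul, pow_mul']

lemma ae_tendsto_average_indicator_occursAt (hn : 0 < n) (r : ℕ) :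
    ∀ᵐ x ∂ℓ, Tendsto
      (fun M : ℕ => (∑ m ∈ Finset.range M, (occursAt w (r + m * n)).indicator (1 : ℝ → ℝ) x) / M)
      atTop (𝓝 ((1 / 2 : ℝ) ^ n)) := by
  set X : ℕ → ℝ → ℝ := fun m => (occursAt w (r + m * n)).indicator 1
  have hindep : iIndepFun X ℓ := (iIndepSet_occursAt w hn r).iIndepFun_indicator
  have hident : ∀ m, IdentDistrib (X m) (X 0) ℓ ℓ := fun m =>
    identDistrib_indicator_one (measurableSet_occursAt w _) (measurableSet_occursAt w _)
      (by rw [measure_occursAt w hn, measure_occursAt w hn])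
  have hint : Integrable (X 0) ℓ := (integrable_const 1).indicator (measurableSet_occursAt w _)
  have hmean : ℓ[X 0] = (1 / 2 : ℝ) ^ n := by
    rw [integral_indicator_one (measurableSet_occursAt w _), measureReal_def, measure_occursAt w hn]
    simp
  simpa only [hmean] using
    strong_law_ae_real X hint (fun i j hij => hindep.indepFun hij) hident

end Occurrences

lemma sum_range_mul_eq_sum_residues {β : Type*} [AddCommMonoid β] (Y : ℕ → β) (M n : ℕ) :
    ∑ i ∈ Finset.range (M * n), Y i
      = ∑ r ∈ Finset.range n, ∑ m ∈ Finset.range M, Y (r + m * n) := by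
  induction M with
  | zero => simp
  | succ M ih =>
    rw [Nat.succ_mul, Finset.sum_range_add, ih, ← Finset.sum_add_distrib]
    refine Finset.sum_congr rfl fun r _ => ?_
    rw [Finset.sum_range_succ, add_comm (M * n)]

/-- Since `u` is monotone, `u K / K` is squeezed between `u (M n) / ((M + 1) n)` and
`u ((M + 1) n) / (M n)` for `M = K / n`. -/
theorem tendsto_div_of_monotone_of_tendsto_mul {u : ℕ → ℝ} (hu : Monotone u) (hu₀ : 0 ≤ u 0)
    {n : ℕ} (hn : 0 < n) {c : ℝ}
    (h : Tendsto (fun M : ℕ => u (M * n) / (M * n : ℕ)) atTop (𝓝 c)) :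
    Tendsto (fun K : ℕ => u K / K) atTop (𝓝 c) := by
  have hn' : (0 : ℝ) < n := Nat.cast_pos.2 hn
  have hlower : Tendsto (fun M : ℕ => u (M * n) / ((M + 1) * n : ℝ)) atTop (𝓝 c) := by
    have := h.mul (tendsto_natCast_div_add_atTop (1 : ℝ))
    rw [mul_one] at this
    refine this.congr' ((eventually_ge_atTop 1).mono fun M hM => ?_)
    have hM' : (0 : ℝ) < M := Nat.cast_pos.2 hM
    push_cast
    field_simp
  have hupper : Tendsto (fun M : ℕ => u ((M + 1) * n) / (M * n : ℝ)) atTop (𝓝 c) := by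
    have := (h.comp (tendsto_add_atTop_nat 1)).mul
      ((tendsto_const_nhds (x := (1 : ℝ))).add tendsto_one_div_atTop_nhds_zero_nat)
    rw [add_zero, mul_one] at this
    refine this.congr' ((eventually_ge_atTop 1).mono fun M hM => ?_)
    have hM' : (0 : ℝ) < M := Nat.cast_pos.2 hM
    simp only [Function.comp_apply]
    push_cast
    field_simp
  have hbracket : ∀ K ≥ n, u (K / n * n) / ((((K / n : ℕ) : ℝ) + 1) * n) ≤ u K / K ∧
      u K / K ≤ u ((K / n + 1) * n) / (((K / n : ℕ) : ℝ) * n) := fun K hK => by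
    have hle : K / n * n ≤ K := Nat.div_mul_le_self K n
    have hlt : K < (K / n + 1) * n := by rw [Nat.succ_mul]; exact Nat.lt_div_mul_add hn
    have hKpos : (0 : ℝ) < K := Nat.cast_pos.2 (by omega)
    have hMpos : (0 : ℝ) < ((K / n : ℕ) : ℝ) := Nat.cast_pos.2 (Nat.div_pos hK hn)
    have hu_nonneg : ∀ m, 0 ≤ u m := fun m => hu₀.trans (hu (Nat.zero_le m))
    constructor
    · calc u (K / n * n) / ((((K / n : ℕ) : ℝ) + 1) * n)
          ≤ u (K / n * n) / K :=
            div_le_div_of_nonneg_left (hu_nonneg _) hKpos (by exact_mod_cast hlt.le)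
        _ ≤ u K / K := div_le_div_of_nonneg_right (hu hle) hKpos.le
    · calc u K / K ≤ u ((K / n + 1) * n) / K := div_le_div_of_nonneg_right (hu hlt.le) hKpos.le
        _ ≤ u ((K / n + 1) * n) / (((K / n : ℕ) : ℝ) * n) :=
            div_le_div_of_nonneg_left (hu_nonneg _) (mul_pos hMpos hn') (by exact_mod_cast hle)
  have hdiv := Nat.tendsto_div_const_atTop hn.ne'
  exact tendsto_of_tendsto_of_tendsto_of_le_of_le' (hlower.comp hdiv) (hupper.comp hdiv)
    ((eventually_ge_atTop n).mono fun K hK => (hbracket K hK).1)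
    ((eventually_ge_atTop n).mono fun K hK => (hbracket K hK).2)

theorem tendsto_average_of_tendsto_average_residue {Y : ℕ → ℝ} (hY : ∀ i, 0 ≤ Y i) {n : ℕ}
    (hn : 0 < n) {c : ℝ}
    (h : ∀ r < n, Tendsto (fun M : ℕ => (∑ m ∈ Finset.range M, Y (r + m * n)) / M) atTop (𝓝 c)) :
    Tendsto (fun K : ℕ => (∑ i ∈ Finset.range K, Y i) / K) atTop (𝓝 c) := by
  have hmono : Monotone fun K => ∑ i ∈ Finset.range K, Y i :=
    monotone_nat_of_le_succ fun K => by rw [Finset.sum_range_succ]; linarith [hY K]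
  refine tendsto_div_of_monotone_of_tendsto_mul hmono (by simp) hn ?_
  have := (tendsto_finsetSum _ fun r hr => h r (Finset.mem_range.1 hr)).div_const (n : ℝ)
  rw [Finset.sum_const, Finset.card_range, nsmul_eq_mul,
    mul_div_cancel_left₀ _ (Nat.cast_pos.2 hn).ne'] at this
  refine this.congr fun M => ?_
  rw [sum_range_mul_eq_sum_residues, ← Finset.sum_div, div_div, Nat.cast_mul]

section Frequency

variable {n : ℕ} (w : Fin n → Bool)

lemma occCount_binDigit_eq_sum (hn : 0 < n) (K : ℕ) (x : ℝ) :
    (occCount (K + (n - 1)) n (fun i : Fin _ => binDigit i x) w : ℝ)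
      = ∑ i ∈ Finset.range K, (occursAt w i).indicator (1 : ℝ → ℝ) x := by
  classical
  have hset : {i : ℕ | i + n ≤ K + (n - 1) ∧
      ∀ (j : Fin n) (h : i + (j : ℕ) < K + (n - 1)), binDigit (i + j) x = w j}
      = ↑({i ∈ Finset.range K | x ∈ occursAt w i}) := by
    ext i
    rw [Finset.coe_filter]
    simp only [Finset.mem_range, occursAt, mem_ofPred_eq]
    exact ⟨fun ⟨h₁, h₂⟩ => ⟨by omega, fun j => h₂ j (by omega)⟩,
      fun ⟨h₁, h₂⟩ => ⟨by omega, fun j _ => h₂ j⟩⟩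
  rw [occCount, ← Set.coe_ofPred, hset, Nat.card_coe_set_eq, Set.ncard_coe_finset,
    Finset.sum_indicator_eq_sum_filter]
  simp

lemma tendsto_freq_of_tendsto_average (hn : 0 < n) {x c : ℝ}
    (h : Tendsto (fun K : ℕ => (∑ i ∈ Finset.range K, (occursAt w i).indicator (1 : ℝ → ℝ) x) / K)
      atTop (𝓝 c)) :
    Tendsto (fun k : ℕ => freq n k w x) atTop (𝓝 c) := by
  rw [← tendsto_add_atTop_iff_nat (n - 1)]
  have := h.mul (tendsto_natCast_div_add_atTop ((n - 1 : ℕ) : ℝ))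
  rw [mul_one] at this
  refine this.congr' ((eventually_ge_atTop 1).mono fun K hK => ?_)
  have hK' : (0 : ℝ) < K := Nat.cast_pos.2 hK
  dsimp only
  rw [freq, occCount_binDigit_eq_sum w hn, Nat.cast_add]
  field_simp

end Frequency

lemma not_isAtypicalPt_of_tendsto {n : ℕ} {κ : ℝ} (hκ : 0 ≤ κ) {w : Fin n → Bool} {x : ℝ}
    (h : Tendsto (fun k : ℕ => freq n k w x) atTop (𝓝 ((1 / 2 : ℝ) ^ n))) :
    ¬ IsAtypicalPt n κ w x := by
  rintro ⟨c, hc, hcluster⟩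
  obtain rfl : c = (1 / 2 : ℝ) ^ n := eq_of_nhds_neBot (ClusterPt.mono hcluster h)
  exact hc ⟨by linarith, by linarith⟩

/-- The set `A_{κ,w} ⊆ [0,1)` of `κ,w`-atypical points has Lebesgue measure zero;
equivalently, for Lebesgue-almost every `x ∈ [0,1)` the frequency `a_k(x,w)` converges
to `2⁻ⁿ` as `k → ∞`. -/
theorem measure_atypical_eq_zero (n : ℕ) (hn : 1 ≤ n) (w : Fin n → Bool) (κ : ℝ)
    (hκ : 0 < κ) :
    volume {x : ℝ | x ∈ Set.Ico (0 : ℝ) 1 ∧ IsAtypicalPt n κ w x} = 0 ∧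
      ∀ᵐ x ∂(volume : Measure ℝ), x ∈ Set.Ico (0 : ℝ) 1 →
        Filter.Tendsto (fun k : ℕ => freq n k w x) Filter.atTop (nhds ((1 / 2 : ℝ) ^ n)) := by
  have hae : ∀ᵐ x ∂ℓ, Tendsto (fun k : ℕ => freq n k w x) atTop (𝓝 ((1 / 2 : ℝ) ^ n)) := by
    filter_upwards [ae_all_iff.2 (ae_tendsto_average_indicator_occursAt w hn)] with x hx
    exact tendsto_freq_of_tendsto_average w hn <|
      tendsto_average_of_tendsto_average_residue (fun i => indicator_nonneg (by simp) x) hn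
        fun r _ => hx r
  have hae' := (ae_restrict_iff' measurableSet_Ico).1 hae
  refine ⟨measure_mono_null ?_ (ae_iff.1 hae'), hae'⟩
  rintro x ⟨hx, hatyp⟩ hconv
  exact not_isAtypicalPt_of_tendsto hκ.le (hconv hx) hatyp
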